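/- arXiv:1311.6293 — 3 statements merged into one kernel-verified Lean document; each statement's English description precedes it below -/
import Mathlib

section
/- Let (Ω, 𝒜, P) be a probability space and let a, b be events with 0 < P(a) < 1, 0 < P(b) < 1, P(¬a ∩ b) > 0 and P(a ∩ ¬b) > 0. Assume the probability-raising condition P(a|b) > P(a|¬b) holds. Then P(a) > P(b) if and only if P(b|a)/P(b|¬a) > P(a|b)/P(a|¬b); that is, a raises the probability of b more than b raises the probability of a exactly when a is observed more frequently than b. (Proposition 3, Probability raising and temporal priority.) -/
open MeasureTheory

lemma pr_aux (x r q : ℝ) (hx0 : 0 < x) (hr : 0 < r) (hq : 0 < q)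
    (h1 : x + r < 1) (h2 : x + q < 1)
    (key : (x + r) * (x + q) < x) :
    (x + r > x + q) ↔
      (x / (x + q)) / (r / (1 - (x + q))) < (x / (x + r)) / (q / (1 - (x + r))) := by
  have hPa : 0 < x + r := by linarith
  have hPb : 0 < x + q := by linarith
  have h1' : 0 < 1 - (x + r) := by linarith
  have h2' : 0 < 1 - (x + q) := by linarith
  rw [div_lt_div_iff₀ (by positivity) (by positivity), div_mul_div_comm, div_mul_div_comm,
    div_lt_div_iff₀ (by positivity) (by positivity)]
  constructor
  · intro h
    nlinarith [mul_pos (sub_pos.mpr h) (sub_pos.mpr key), mul_pos hx0 hq]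
  · intro h
    by_contra hc
    push_neg at hc
    have hqr : r ≤ q := by linarith
    nlinarith [mul_nonneg (mul_nonneg hx0.le (sub_nonneg.mpr hqr)) (sub_pos.mpr key).le]

/-- Proposition 3 (Probability raising and temporal priority): assuming the
probability-raising condition `P(a|b) > P(a|¬b)`, we have `P(a) > P(b)` iff
`P(b|a)/P(b|¬a) > P(a|b)/P(a|¬b)`. -/
theorem probability_raising_temporal_priority
    {Ω : Type*} [MeasurableSpace Ω] (P : Measure Ω) [IsProbabilityMeasure P]
    (a b : Set Ω) (ha : MeasurableSet a) (hb : MeasurableSet b)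
    (ha0 : 0 < (P a).toReal) (ha1 : (P a).toReal < 1)
    (hb0 : 0 < (P b).toReal) (hb1 : (P b).toReal < 1)
    (hnab : 0 < (P (aᶜ ∩ b)).toReal) (hanb : 0 < (P (a ∩ bᶜ)).toReal)
    (hpr : (P (b ∩ a)).toReal / (P b).toReal > (P (bᶜ ∩ a)).toReal / (P bᶜ).toReal) :
    (P a).toReal > (P b).toReal ↔
      ((P (a ∩ b)).toReal / (P a).toReal) / ((P (aᶜ ∩ b)).toReal / (P aᶜ).toReal) >
        ((P (b ∩ a)).toReal / (P b).toReal) / ((P (bᶜ ∩ a)).toReal / (P bᶜ).toReal) := by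
  have hfin : ∀ s : Set Ω, P s ≠ ⊤ := fun s => measure_ne_top P s
  set x := (P (a ∩ b)).toReal with hx
  set r := (P (a ∩ bᶜ)).toReal with hrdef
  set q := (P (aᶜ ∩ b)).toReal with hqdef
  have hba : (P (b ∩ a)).toReal = x := by rw [hx, Set.inter_comm]
  have hbca : (P (bᶜ ∩ a)).toReal = r := by rw [hrdef, Set.inter_comm]
  have hPa : (P a).toReal = x + r := by
    rw [hx, hrdef, ← Set.diff_eq (s := a), ← ENNReal.toReal_add (hfin _) (hfin _),
      measure_inter_add_diff a hb]
  have hPb : (P b).toReal = x + q := by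
    rw [hx, hqdef, Set.inter_comm a b, Set.inter_comm aᶜ b, ← Set.diff_eq (s := b),
      ← ENNReal.toReal_add (hfin _) (hfin _), measure_inter_add_diff b ha]
  have hPac : (P aᶜ).toReal = 1 - (P a).toReal := by
    rw [prob_compl_eq_one_sub ha, ENNReal.toReal_sub_of_le prob_le_one (by simp),
      ENNReal.toReal_one]
  have hPbc : (P bᶜ).toReal = 1 - (P b).toReal := by
    rw [prob_compl_eq_one_sub hb, ENNReal.toReal_sub_of_le prob_le_one (by simp),
      ENNReal.toReal_one]
  have h1 : x + r < 1 := hPa ▸ ha1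
  have h2 : x + q < 1 := hPb ▸ hb1
  have h2' : 0 < 1 - (x + q) := by linarith
  have hpr' : x / (x + q) > r / (1 - (x + q)) := by
    rwa [hba, hbca, hPbc, hPb] at hpr
  have hx0 : 0 < x := by
    have hpos : 0 < x / (x + q) := lt_trans (by positivity) hpr'
    rcases div_pos_iff.mp hpos with ⟨h', _⟩ | ⟨_, h'⟩
    · exact h'
    · linarith
  have key : (x + r) * (x + q) < x := by
    rw [gt_iff_lt, div_lt_div_iff₀ h2' (by linarith)] at hpr'
    nlinarith
  rw [hPa, hPb, hPac, hPbc, hPa, hPb, hba, hbca, gt_iff_lt, gt_iff_lt]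
  exact pr_aux x r q hx0 hanb hnab h1 h2 key
end

section
/- Let (Ω, 𝒜, P) be a probability space and let a, b be events with 0 < P(a) < 1, 0 < P(b) < 1, P(¬a ∩ b) > 0 and P(a ∩ ¬b) > 0, and assume the probability-raising condition P(a|b) > P(a|¬b) holds. Then the following are equivalent: (i) P(a) > P(b); (ii) P(b|a)/P(b|¬a) > P(a|b)/P(a|¬b); (iii) α_{a→b} > α_{b→a}. (Proposition 4, Monotonic normalization.) -/
open MeasureTheory

/-- The raw probability-raising estimator
`α_{a→b} = (P(b|a) − P(b|¬a))/(P(b|a) + P(b|¬a))`. -/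
noncomputable def alphaEst {Ω : Type*} [MeasurableSpace Ω] (P : Measure Ω)
    (a b : Set Ω) : ℝ :=
  ((P (a ∩ b)).toReal / (P a).toReal - (P (aᶜ ∩ b)).toReal / (P aᶜ).toReal) /
    ((P (a ∩ b)).toReal / (P a).toReal + (P (aᶜ ∩ b)).toReal / (P aᶜ).toReal)

lemma aux2 (u v u' v' : ℝ) (hu : 0 < u) (hv : 0 < v) (hu' : 0 < u') (hv' : 0 < v') :
    (u / v > u' / v' ↔ (u - v) / (u + v) > (u' - v') / (u' + v')) := by
  rw [gt_iff_lt, gt_iff_lt, div_lt_div_iff₀ hv' hv,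
    div_lt_div_iff₀ (by linarith) (by linarith)]
  constructor <;> intro h <;> nlinarith

lemma aux (pa pb x y z : ℝ)
    (hpa0 : 0 < pa) (hpa1 : pa < 1) (hpb0 : 0 < pb) (hpb1 : pb < 1)
    (hy0 : 0 < y) (hz0 : 0 < z)
    (hy : x + y = pb) (hz : x + z = pa)
    (hpr : x / pb > z / (1 - pb)) :
    (pa > pb ↔ (x / pa) / (y / (1 - pa)) > (x / pb) / (z / (1 - pb))) ∧
    ((x / pa) / (y / (1 - pa)) > (x / pb) / (z / (1 - pb)) ↔
      (x / pa - y / (1 - pa)) / (x / pa + y / (1 - pa)) >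
        (x / pb - z / (1 - pb)) / (x / pb + z / (1 - pb))) := by
  have hy' : y = pb - x := by linarith
  have hz' : z = pa - x := by linarith
  subst hy' hz'
  have hpa1' : 0 < 1 - pa := by linarith
  have hpb1' : 0 < 1 - pb := by linarith
  have hpr' : (pa - x) * pb < x * (1 - pb) := by
    rw [gt_iff_lt, div_lt_div_iff₀ hpb1' hpb0] at hpr; exact hpr
  have hx : pa * pb < x := by nlinarith
  have hx0 : 0 < x := lt_trans (mul_pos hpa0 hpb0) hx
  have e1 : (x / pa) / ((pb - x) / (1 - pa)) = x * (1 - pa) / (pa * (pb - x)) := by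
    field_simp
  have e2 : (x / pb) / ((pa - x) / (1 - pb)) = x * (1 - pb) / (pb * (pa - x)) := by
    field_simp
  have p1 : pa > pb ↔ (x / pa) / ((pb - x) / (1 - pa)) > (x / pb) / ((pa - x) / (1 - pb)) := by
    rw [e1, e2, gt_iff_lt, gt_iff_lt, div_lt_div_iff₀ (by positivity) (by positivity)]
    constructor <;> intro h
    · nlinarith [mul_pos hx0 (mul_pos (sub_pos.2 h) (sub_pos.2 hx))]
    · by_contra hc
      push_neg at hc
      nlinarith [mul_nonneg (mul_nonneg hx0.le (sub_nonneg.2 hc)) (sub_pos.2 hx).le]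
  refine ⟨p1, aux2 (x / pa) ((pb - x) / (1 - pa)) (x / pb) ((pa - x) / (1 - pb))
    (by positivity) (by positivity) (by positivity) (by positivity)⟩

/-- Proposition 4 (Monotonic normalization): assuming the probability-raising
condition `P(a|b) > P(a|¬b)`, the following are equivalent:
(i) `P(a) > P(b)`; (ii) `P(b|a)/P(b|¬a) > P(a|b)/P(a|¬b)`;
(iii) `α_{a→b} > α_{b→a}`. -/
theorem monotonic_normalization
    {Ω : Type*} [MeasurableSpace Ω] (P : Measure Ω) [IsProbabilityMeasure P]
    (a b : Set Ω) (ha : MeasurableSet a) (hb : MeasurableSet b)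
    (ha0 : 0 < (P a).toReal) (ha1 : (P a).toReal < 1)
    (hb0 : 0 < (P b).toReal) (hb1 : (P b).toReal < 1)
    (hnab : 0 < (P (aᶜ ∩ b)).toReal) (hanb : 0 < (P (a ∩ bᶜ)).toReal)
    (hpr : (P (b ∩ a)).toReal / (P b).toReal > (P (bᶜ ∩ a)).toReal / (P bᶜ).toReal) :
    ((P a).toReal > (P b).toReal ↔
      ((P (a ∩ b)).toReal / (P a).toReal) / ((P (aᶜ ∩ b)).toReal / (P aᶜ).toReal) >
        ((P (b ∩ a)).toReal / (P b).toReal) / ((P (bᶜ ∩ a)).toReal / (P bᶜ).toReal)) ∧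
    (((P (a ∩ b)).toReal / (P a).toReal) / ((P (aᶜ ∩ b)).toReal / (P aᶜ).toReal) >
        ((P (b ∩ a)).toReal / (P b).toReal) / ((P (bᶜ ∩ a)).toReal / (P bᶜ).toReal) ↔
      alphaEst P a b > alphaEst P b a) := by
  have hca : (P aᶜ).toReal = 1 - (P a).toReal := by
    have h := congrArg ENNReal.toReal (prob_add_prob_compl (μ := P) ha)
    rw [ENNReal.toReal_add (measure_ne_top _ _) (measure_ne_top _ _)] at h
    simp at h; linarith
  have hcb : (P bᶜ).toReal = 1 - (P b).toReal := by
    have h := congrArg ENNReal.toReal (prob_add_prob_compl (μ := P) hb)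
    rw [ENNReal.toReal_add (measure_ne_top _ _) (measure_ne_top _ _)] at h
    simp at h; linarith
  have hab : (P (b ∩ a)).toReal = (P (a ∩ b)).toReal := by rw [Set.inter_comm]
  have hba : (P (bᶜ ∩ a)).toReal = (P (a ∩ bᶜ)).toReal := by rw [Set.inter_comm]
  have hsum1 : (P (a ∩ b)).toReal + (P (a ∩ bᶜ)).toReal = (P a).toReal := by
    have h := congrArg ENNReal.toReal (measure_inter_add_diff (μ := P) a hb)
    rw [ENNReal.toReal_add (measure_ne_top _ _) (measure_ne_top _ _), Set.diff_eq] at h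
    exact h
  have hsum2 : (P (a ∩ b)).toReal + (P (aᶜ ∩ b)).toReal = (P b).toReal := by
    have h := congrArg ENNReal.toReal (measure_inter_add_diff (μ := P) b ha)
    rw [ENNReal.toReal_add (measure_ne_top _ _) (measure_ne_top _ _), Set.diff_eq,
      Set.inter_comm b a, Set.inter_comm b aᶜ] at h
    exact h
  rw [hab, hba, hcb] at hpr
  rw [hca, hcb, hab, hba]
  unfold alphaEst
  rw [hca, hcb, hab, hba]
  exact aux (P a).toReal (P b).toReal (P (a ∩ b)).toReal (P (aᶜ ∩ b)).toReal
    (P (a ∩ bᶜ)).toReal ha0 ha1 hb0 hb1 hnab hanb hsum2 hsum1 hpr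
end

section
/- Let (Ω, 𝒜, P) be a probability space and let a, b be events with 0 < P(a) < 1 and 0 < P(b) < 1. Then the correction factor is bounded as −1 ≤ β_{a→b} ≤ (1 − max(P(a), P(b)))/(1 + max(P(a), P(b))), and the upper bound is strictly less than 1. -/
open MeasureTheory

/-- The correlation correction factor
`β_{a→b} = (P(a ∩ b) − P(a)·P(b))/(P(a ∩ b) + P(a)·P(b))`. -/
noncomputable def betaEst {Ω : Type*} [MeasurableSpace Ω] (P : Measure Ω)
    (a b : Set Ω) : ℝ :=
  ((P (a ∩ b)).toReal - (P a).toReal * (P b).toReal) /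
    ((P (a ∩ b)).toReal + (P a).toReal * (P b).toReal)

/-- Bounds on the correction factor:
`−1 ≤ β_{a→b} ≤ (1 − max(P(a),P(b)))/(1 + max(P(a),P(b)))`, and the upper
bound is strictly less than `1`. -/
theorem beta_bounds
    {Ω : Type*} [MeasurableSpace Ω] (P : Measure Ω) [IsProbabilityMeasure P]
    (a b : Set Ω) (ha : MeasurableSet a) (hb : MeasurableSet b)
    (ha0 : 0 < (P a).toReal) (ha1 : (P a).toReal < 1)
    (hb0 : 0 < (P b).toReal) (hb1 : (P b).toReal < 1) :
    (-1 ≤ betaEst P a b ∧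
      betaEst P a b ≤
        (1 - max (P a).toReal (P b).toReal) / (1 + max (P a).toReal (P b).toReal)) ∧
    (1 - max (P a).toReal (P b).toReal) / (1 + max (P a).toReal (P b).toReal) < 1 := by
  set p := (P a).toReal with hp
  set q := (P b).toReal with hq
  set x := (P (a ∩ b)).toReal with hxdef
  have hx0 : 0 ≤ x := ENNReal.toReal_nonneg
  have hxa : x ≤ p :=
    ENNReal.toReal_mono (measure_ne_top P a) (measure_mono Set.inter_subset_left)
  have hxb : x ≤ q :=
    ENNReal.toReal_mono (measure_ne_top P b) (measure_mono Set.inter_subset_right)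
  set m := max p q with hm
  have hm0 : 0 < m := lt_of_lt_of_le ha0 (le_max_left _ _)
  have hden : 0 < x + p * q := by positivity
  have hden2 : 0 < 1 + m := by positivity
  have hxm : x * m ≤ p * q := by
    calc x * m ≤ min p q * m := by
          apply mul_le_mul_of_nonneg_right (le_min hxa hxb) hm0.le
      _ = p * q := min_mul_max p q
  have hbeta : betaEst P a b = (x - p * q) / (x + p * q) := rfl
  refine ⟨⟨?_, ?_⟩, ?_⟩
  · rw [hbeta, le_div_iff₀ hden]
    nlinarith
  · rw [hbeta, div_le_div_iff₀ hden hden2]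
    nlinarith
  · rw [div_lt_one hden2]
    linarith
end
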